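/- Let p, γ, η : ℝ × ℝ → GL_n(ℝ) be smooth maps and let B be an Ad-invariant bilinear form on n×n real matrices. Then at every point of ℝ × ℝ one has B(Θ(pγ), φ̂(η)) − B(Θ(p), φ̂(γη)) + B(Θ(p), φ̂(γ)) = B(Θ(γ), φ̂(η)), where pγ and γη denote pointwise matrix products. (This is the pointwise integrand identity establishing δε = ν in the paper's Lemma that ∇ = μ − π*ε is a bundle gerbe connection on the basic gerbe.) -/

import Mathlib

attribute [local instance] Matrix.normedAddCommGroup Matrix.normedSpace

/-- Partial derivative in the first (`s`) variable of a matrix-valued map on `ℝ × ℝ`. -/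
noncomputable def pdS {n : ℕ} (g : ℝ × ℝ → Matrix (Fin n) (Fin n) ℝ) (x : ℝ × ℝ) :
    Matrix (Fin n) (Fin n) ℝ := fderiv ℝ g x (1, 0)

/-- Partial derivative in the second (`θ`) variable of a matrix-valued map on `ℝ × ℝ`. -/
noncomputable def pdθ {n : ℕ} (g : ℝ × ℝ → Matrix (Fin n) (Fin n) ℝ) (x : ℝ × ℝ) :
    Matrix (Fin n) (Fin n) ℝ := fderiv ℝ g x (0, 1)

/-- `Θ(g) = g⁻¹ · ∂ₛ g`, the left Maurer–Cartan form evaluated on the variation. -/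
noncomputable def Th {n : ℕ} (g : ℝ × ℝ → Matrix (Fin n) (Fin n) ℝ) (x : ℝ × ℝ) :
    Matrix (Fin n) (Fin n) ℝ := (g x)⁻¹ * pdS g x

/-- `Θ̂(g) = (∂ₛ g) · g⁻¹`, the right Maurer–Cartan form evaluated on the variation. -/
noncomputable def ThHat {n : ℕ} (g : ℝ × ℝ → Matrix (Fin n) (Fin n) ℝ) (x : ℝ × ℝ) :
    Matrix (Fin n) (Fin n) ℝ := pdS g x * (g x)⁻¹

/-- `φ(g) = g⁻¹ · ∂_θ g`, the Higgs field. -/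
noncomputable def phiL {n : ℕ} (g : ℝ × ℝ → Matrix (Fin n) (Fin n) ℝ) (x : ℝ × ℝ) :
    Matrix (Fin n) (Fin n) ℝ := (g x)⁻¹ * pdθ g x

/-- `φ̂(g) = (∂_θ g) · g⁻¹`, the conjugated Higgs field. -/
noncomputable def phiHat {n : ℕ} (g : ℝ × ℝ → Matrix (Fin n) (Fin n) ℝ) (x : ℝ × ℝ) :
    Matrix (Fin n) (Fin n) ℝ := pdθ g x * (g x)⁻¹

/-- `Ad_g(X) = g · X · g⁻¹`. -/
noncomputable def AdM {n : ℕ} (g X : Matrix (Fin n) (Fin n) ℝ) :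
    Matrix (Fin n) (Fin n) ℝ := g * X * g⁻¹

/-- A bilinear form on `n × n` matrices is `Ad`-invariant if it is preserved by
conjugation by any invertible matrix. -/
def AdInvariant {n : ℕ}
    (B : Matrix (Fin n) (Fin n) ℝ →ₗ[ℝ] Matrix (Fin n) (Fin n) ℝ →ₗ[ℝ] ℝ) : Prop :=
  ∀ g : Matrix (Fin n) (Fin n) ℝ, IsUnit g →
    ∀ X Y : Matrix (Fin n) (Fin n) ℝ, B (g * X * g⁻¹) (g * Y * g⁻¹) = B X Y

section Aux

variable {n : ℕ}

/-- Matrix multiplication as a continuous bilinear map (finite dimension). -/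
noncomputable def mulCLM (n : ℕ) :
    Matrix (Fin n) (Fin n) ℝ →L[ℝ] Matrix (Fin n) (Fin n) ℝ →L[ℝ] Matrix (Fin n) (Fin n) ℝ :=
  LinearMap.toContinuousLinearMap
    { toFun := fun A => LinearMap.toContinuousLinearMap (LinearMap.mulLeft ℝ A)
      map_add' := by
        intro A B; ext C; simp [add_mul]
      map_smul' := by
        intro c A; ext C; simp [smul_mul_assoc] }

@[simp] lemma mulCLM_apply (A B : Matrix (Fin n) (Fin n) ℝ) : mulCLM n A B = A * B := rfl

lemma fderiv_matmul {f g : ℝ × ℝ → Matrix (Fin n) (Fin n) ℝ} {x : ℝ × ℝ}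
    (hf : DifferentiableAt ℝ f x) (hg : DifferentiableAt ℝ g x) (v : ℝ × ℝ) :
    fderiv ℝ (fun y => f y * g y) x v
      = fderiv ℝ f x v * g x + f x * fderiv ℝ g x v := by
  have hbil : IsBoundedBilinearMap ℝ
      (fun q : Matrix (Fin n) (Fin n) ℝ × Matrix (Fin n) (Fin n) ℝ => q.1 * q.2) := by
    have := (mulCLM n).isBoundedBilinearMap
    exact this
  have h : HasFDerivAt (fun y => f y * g y)
      ((hbil.deriv (f x, g x)).comp ((fderiv ℝ f x).prod (fderiv ℝ g x))) x := by
    exact (hbil.hasFDerivAt (f x, g x)).comp x (HasFDerivAt.prodMk hf.hasFDerivAt hg.hasFDerivAt)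
  rw [show fderiv ℝ (fun y => f y * g y) x = _ from h.fderiv]
  simp only [ContinuousLinearMap.comp_apply, ContinuousLinearMap.prod_apply,
    IsBoundedBilinearMap.deriv_apply, add_comm]
  exact hbil.deriv_apply (f x, g x) (fderiv ℝ f x v, fderiv ℝ g x v)

end Aux

/-- The pointwise integrand identity establishing `δε = ν` for the basic
gerbe connection: for smooth `p, γ, η : ℝ × ℝ → GLₙ(ℝ)` and an `Ad`-invariant bilinear
form `B`, at every point
`B(Θ(pγ), φ̂(η)) − B(Θ(p), φ̂(γη)) + B(Θ(p), φ̂(γ)) = B(Θ(γ), φ̂(η))`. -/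
theorem delta_epsilon_eq_nu_integrand
    {n : ℕ} (hn : 1 ≤ n)
    (B : Matrix (Fin n) (Fin n) ℝ →ₗ[ℝ] Matrix (Fin n) (Fin n) ℝ →ₗ[ℝ] ℝ)
    (hB : AdInvariant B)
    (p γ η : ℝ × ℝ → Matrix (Fin n) (Fin n) ℝ)
    (hp : ContDiff ℝ (⊤ : ℕ∞) p) (hγ : ContDiff ℝ (⊤ : ℕ∞) γ) (hη : ContDiff ℝ (⊤ : ℕ∞) η)
    (hpU : ∀ x, IsUnit (p x)) (hγU : ∀ x, IsUnit (γ x)) (hηU : ∀ x, IsUnit (η x)) :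
    ∀ x : ℝ × ℝ,
      B (Th (fun y => p y * γ y) x) (phiHat η x)
        - B (Th p x) (phiHat (fun y => γ y * η y) x)
        + B (Th p x) (phiHat γ x)
      = B (Th γ x) (phiHat η x) := by
  intro x
  have hpd : DifferentiableAt ℝ p x := (hp.differentiable (by simp)).differentiableAt
  have hγd : DifferentiableAt ℝ γ x := (hγ.differentiable (by simp)).differentiableAt
  have hηd : DifferentiableAt ℝ η x := (hη.differentiable (by simp)).differentiableAt
  have hpdet : IsUnit (p x).det := (Matrix.isUnit_iff_isUnit_det _).mp (hpU x)
  have hγdet : IsUnit (γ x).det := (Matrix.isUnit_iff_isUnit_det _).mp (hγU x)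
  have hηdet : IsUnit (η x).det := (Matrix.isUnit_iff_isUnit_det _).mp (hηU x)
  have hpinv : (p x)⁻¹ * p x = 1 := Matrix.nonsing_inv_mul _ hpdet
  have hγinv : (γ x)⁻¹ * γ x = 1 := Matrix.nonsing_inv_mul _ hγdet
  have hηmul : η x * (η x)⁻¹ = 1 := Matrix.mul_nonsing_inv _ hηdet
  -- Θ(pγ) = γ⁻¹ Θ(p) γ + Θ(γ)
  have hTh : Th (fun y => p y * γ y) x = (γ x)⁻¹ * Th p x * γ x + Th γ x := by
    unfold Th pdS
    rw [fderiv_matmul hpd hγd, Matrix.mul_inv_rev, Matrix.mul_add]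
    congr 1
    · simp [mul_assoc]
    · calc (γ x)⁻¹ * (p x)⁻¹ * (p x * fderiv ℝ γ x (1, 0))
          = (γ x)⁻¹ * (((p x)⁻¹ * p x) * fderiv ℝ γ x (1, 0)) := by
            simp [mul_assoc]
        _ = (γ x)⁻¹ * fderiv ℝ γ x (1, 0) := by rw [hpinv, one_mul]
  -- φ̂(γη) = φ̂(γ) + γ φ̂(η) γ⁻¹
  have hPhi : phiHat (fun y => γ y * η y) x
      = phiHat γ x + γ x * phiHat η x * (γ x)⁻¹ := by
    unfold phiHat pdθ
    rw [fderiv_matmul hγd hηd, Matrix.mul_inv_rev, Matrix.add_mul]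
    congr 1
    · calc fderiv ℝ γ x (0, 1) * η x * ((η x)⁻¹ * (γ x)⁻¹)
          = fderiv ℝ γ x (0, 1) * ((η x * (η x)⁻¹) * (γ x)⁻¹) := by
            simp [mul_assoc]
        _ = fderiv ℝ γ x (0, 1) * (γ x)⁻¹ := by rw [hηmul, one_mul]
    · simp [mul_assoc]
  -- Ad-invariance
  have had : B ((γ x)⁻¹ * Th p x * γ x) (phiHat η x)
      = B (Th p x) (γ x * phiHat η x * (γ x)⁻¹) := by
    have hγinvU : IsUnit (γ x)⁻¹ :=
      Matrix.isUnit_nonsing_inv_iff.mpr (hγU x)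
    have := hB (γ x)⁻¹ hγinvU (Th p x) (γ x * phiHat η x * (γ x)⁻¹)
    rw [Matrix.nonsing_inv_nonsing_inv _ hγdet] at this
    have hY : (γ x)⁻¹ * (γ x * phiHat η x * (γ x)⁻¹) * γ x = phiHat η x := by
      calc (γ x)⁻¹ * (γ x * phiHat η x * (γ x)⁻¹) * γ x
          = ((γ x)⁻¹ * γ x) * phiHat η x * ((γ x)⁻¹ * γ x) := by
            simp [mul_assoc]
        _ = phiHat η x := by rw [hγinv, one_mul, mul_one]
    rw [hY] at this
    exact this
  rw [hTh, hPhi]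
  simp only [map_add, LinearMap.add_apply]
  rw [had]
  ring
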